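/- arXiv:1810.09778 — 4 statements merged into one kernel-verified Lean document; each statement's English description precedes it below -/
import Mathlib

section
/- Let (s_k) be a real sequence converging to 0, and let K ∈ ℕ be the least integer satisfying sup_{0 ≤ l ≤ K} s_l > sup_{l > K} s_l (assuming such an integer exists). Then s_K > 0. -/
/-!
Write `A k = sup_{l ≤ k} s_l` and `B k = sup_{l > k} s_l`. Since `s → 0`, every tail supremum
`B k` is `≥ 0`, so `A K > B K ≥ 0`. It remains to see that `s K = A K`. For `K = 0` this is
trivial. For `K = k + 1`, if `s K < A K` then the maximum `A K` is already attained before `K`,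
so `A k = A K` and `B k = max (s K) (B K) < A K = A k`; thus `k` would be an earlier index with
`B k < A k`, against the minimality of `K`.
-/

open Set Filter Topology

section TailSupremum

variable {α : Type*} [ConditionallyCompleteLinearOrder α] {s : ℕ → α}

theorem sSup_image_Iic_succ (k : ℕ) :
    sSup (s '' Iic (k + 1)) = sSup (s '' Iic k) ⊔ s (k + 1) := by
  rw [← Order.succ_eq_add_one, Order.Iic_succ, image_insert_eq,
    csSup_insert ((finite_Iic k).image s).bddAbove (nonempty_Iic.image s), sup_comm]

theorem sSup_image_Ioi_eq_sup (hb : BddAbove (range s)) (k : ℕ) :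
    sSup (s '' Ioi k) = s (k + 1) ⊔ sSup (s '' Ioi (k + 1)) := by
  have hIoi : Ioi k = insert (k + 1) (Ioi (k + 1)) := by
    ext n
    simp only [mem_Ioi, mem_insert_iff]
    omega
  rw [hIoi, image_insert_eq,
    csSup_insert (hb.mono (image_subset_range s _)) (nonempty_Ioi.image s)]

theorem le_sSup_image_Ioi_of_tendsto [TopologicalSpace α] [ClosedIicTopology α] {a : α}
    (hb : BddAbove (range s)) (hs : Tendsto s atTop (𝓝 a)) (k : ℕ) :
    a ≤ sSup (s '' Ioi k) :=
  le_of_tendsto hs <| (eventually_gt_atTop k).mono fun _ hn =>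
    le_csSup (hb.mono (image_subset_range s _)) (mem_image_of_mem s hn)

theorem eq_sSup_image_Iic_of_minimal (hb : BddAbove (range s)) {K : ℕ}
    (hK : sSup (s '' Ioi K) < sSup (s '' Iic K))
    (hmin : ∀ k < K, ¬ sSup (s '' Ioi k) < sSup (s '' Iic k)) :
    s K = sSup (s '' Iic K) := by
  cases K with
  | zero => rw [← bot_eq_zero, Iic_bot, image_singleton, csSup_singleton]
  | succ k =>
    rw [sSup_image_Iic_succ] at hK ⊢
    rcases lt_or_ge (s (k + 1)) (sSup (s '' Iic k)) with hlt | hle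
    · rw [sup_of_le_left hlt.le] at hK
      refine absurd ?_ (hmin k k.lt_succ_self)
      rw [sSup_image_Ioi_eq_sup hb]
      exact sup_lt_iff.mpr ⟨hlt, hK⟩
    · exact (sup_of_le_right hle).symm

end TailSupremum

theorem stmt_4 (s : ℕ → ℝ) (hs : Filter.Tendsto s Filter.atTop (nhds 0))
    (T : Set ℕ) (hT : T = {k : ℕ | sSup (s '' Set.Ioi k) < sSup (s '' Set.Iic k)})
    (hne : T.Nonempty) (K : ℕ) (hK : K = sInf T) :
    0 < s K := by
  subst hT hK
  have hb := hs.bddAbove_range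
  have hmem := Nat.sInf_mem hne
  rw [eq_sSup_image_Iic_of_minimal hb hmem fun k hk => Nat.notMem_of_lt_sInf hk]
  exact (le_sSup_image_Ioi_of_tendsto hb hs _).trans_lt hmem
end

section
/- Let A be a d×d real matrix and P a positive definite d×d real matrix such that P − AᵀPA is positive definite. Then the operator norm of A with respect to the norm ‖x‖_P = √(xᵀPx) satisfies 0 ≤ ‖A‖_P < 1, i.e., for all x ≠ 0, xᵀAᵀPAx < xᵀPx, and the supremum of xᵀAᵀPAx over {x : xᵀPx = 1} is strictly less than 1. -/
/-!
Write `Q = P - AᵀPA`. Pointwise, `xᵀAᵀPAx = xᵀPx - xᵀQx < xᵀPx` for `x ≠ 0`. For the uniform bound,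
a positive definite form dominates a multiple of any other quadratic form: by compactness of the
unit sphere and homogeneity, `c * xᵀPx ≤ xᵀQx` for some `c > 0`, so on `xᵀPx = 1` we get
`xᵀAᵀPAx ≤ 1 - c`.
-/

open Matrix

namespace Matrix

variable {n : Type*} [Fintype n]

lemma smul_dotProduct_mulVec_smul (Q : Matrix n n ℝ) (c : ℝ) (x : n → ℝ) :
    (c • x) ⬝ᵥ Q *ᵥ (c • x) = c ^ 2 * (x ⬝ᵥ Q *ᵥ x) := by
  simp only [mulVec_smul, smul_dotProduct, dotProduct_smul, smul_eq_mul]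
  ring

lemma continuous_dotProduct_mulVec_self (Q : Matrix n n ℝ) :
    Continuous fun x : n → ℝ => x ⬝ᵥ Q *ᵥ x := by
  simp only [dotProduct, mulVec]
  fun_prop

lemma PosDef.exists_pos_mul_dotProduct_mulVec_le {Q : Matrix n n ℝ} (hQ : Q.PosDef)
    (P : Matrix n n ℝ) : ∃ c > 0, ∀ x : n → ℝ, c * (x ⬝ᵥ P *ᵥ x) ≤ x ⬝ᵥ Q *ᵥ x := by
  have hQc := continuous_dotProduct_mulVec_self Q
  have hPc := continuous_dotProduct_mulVec_self P
  have hQpos : ∀ x : n → ℝ, x ≠ 0 → 0 < x ⬝ᵥ Q *ᵥ x := fun x hx => by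
    simpa using hQ.dotProduct_mulVec_pos hx
  -- Dividing by `|xᵀPx| + 1` yields the lower bound for `Q` and the upper bound for `P` at once.
  have hratio : Continuous fun x : n → ℝ => x ⬝ᵥ Q *ᵥ x / (|x ⬝ᵥ P *ᵥ x| + 1) :=
    hQc.div (hPc.abs.add continuous_const) fun x => by positivity
  obtain ⟨c, hc, hcS⟩ := (isCompact_sphere (0 : n → ℝ) 1).exists_forall_le' hratio.continuousOn
    (a := 0) fun u hu => div_pos (hQpos u (ne_zero_of_mem_unit_sphere ⟨u, hu⟩)) (by positivity)
  have hsphere : ∀ u ∈ Metric.sphere (0 : n → ℝ) 1, c * (u ⬝ᵥ P *ᵥ u) ≤ u ⬝ᵥ Q *ᵥ u := by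
    intro u hu
    have := (le_div_iff₀ (by positivity)).mp (hcS u hu)
    nlinarith [le_abs_self (u ⬝ᵥ P *ᵥ u)]
  refine ⟨c, hc, fun x => ?_⟩
  rcases eq_or_ne x 0 with rfl | hx
  · simp
  set u := ‖x‖⁻¹ • x
  have hnx : ‖x‖ ≠ 0 := norm_ne_zero_iff.mpr hx
  have hx_eq : ‖x‖ • u = x := by rw [smul_smul, mul_inv_cancel₀ hnx, one_smul]
  have hu : u ∈ Metric.sphere (0 : n → ℝ) 1 := by simp [u, norm_smul, hnx]
  have hscale (R : Matrix n n ℝ) : x ⬝ᵥ R *ᵥ x = ‖x‖ ^ 2 * (u ⬝ᵥ R *ᵥ u) := by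
    rw [← smul_dotProduct_mulVec_smul, hx_eq]
  rw [hscale P, hscale Q]
  nlinarith [hsphere u hu, sq_nonneg ‖x‖]

end Matrix

theorem stmt_9_general (d : ℕ) (A P : Matrix (Fin d) (Fin d) ℝ)
    (hLyap : (P - Aᵀ * P * A).PosDef) :
    (∀ x : Fin d → ℝ, x ≠ 0 → x ⬝ᵥ (Aᵀ * P * A).mulVec x < x ⬝ᵥ P.mulVec x) ∧
      sSup {r : ℝ | ∃ x : Fin d → ℝ, x ⬝ᵥ P.mulVec x = 1 ∧ r = x ⬝ᵥ (Aᵀ * P * A).mulVec x} < 1 := by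
  refine ⟨fun x hx => ?_, ?_⟩
  · have := hLyap.dotProduct_mulVec_pos hx
    rw [star_trivial, sub_mulVec, dotProduct_sub] at this
    linarith
  · obtain ⟨c, hc, hcQ⟩ := hLyap.exists_pos_mul_dotProduct_mulVec_le P
    refine lt_of_le_of_lt (b := max (1 - c) 0) ?_ (max_lt (by linarith) one_pos)
    refine Real.sSup_le ?_ (le_max_right _ _)
    rintro r ⟨x, hx, rfl⟩
    have := hcQ x
    rw [sub_mulVec, dotProduct_sub, hx] at this
    exact le_max_of_le_left (by linarith)

theorem stmt_9 (d : ℕ) (A P : Matrix (Fin d) (Fin d) ℝ)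
    (hP : P.PosDef) (hLyap : (P - Aᵀ * P * A).PosDef) :
    (∀ x : Fin d → ℝ, x ≠ 0 → x ⬝ᵥ (Aᵀ * P * A).mulVec x < x ⬝ᵥ P.mulVec x) ∧
      sSup {r : ℝ | ∃ x : Fin d → ℝ, x ⬝ᵥ P.mulVec x = 1 ∧ r = x ⬝ᵥ (Aᵀ * P * A).mulVec x} < 1 :=
  stmt_9_general d A P hLyap
end

section
/- Let A be a d×d real matrix with spectral radius strictly less than 1. Then there exists a positive definite matrix P such that P − AᵀPA is positive definite. -/
open Matrix Filter Topology
open scoped NNReal ENNReal ComplexOrder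

/-!
Gelfand's formula turns `ρ(A) < 1` into a geometric bound `‖Aᵏ‖ ≤ rᵏ` (eventually, some `r < 1`),
so `P = ∑ₖ (Aᵏ)ᴴ Q Aᵏ` converges for every `Q`. Shifting the summation index gives the discrete
Lyapunov equation `P - Aᴴ P A = Q`. As a limit of positive semidefinite partial sums `P` is
positive semidefinite, hence `P = Q + Aᴴ P A` is positive definite when `Q` is; take `Q = 1`.
-/

-- The Frobenius norm is the convenient choice: it is submultiplicative and unchanged by
-- complexifying the entries.
attribute [local instance] Matrix.frobeniusNormedRing Matrix.frobeniusNormedAlgebra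

theorem spectrum.eventually_norm_pow_le {A : Type*} [NormedRing A] [NormedAlgebra ℂ A]
    [CompleteSpace A] (a : A) {r : ℝ≥0} (hr : spectralRadius ℂ a < r) :
    ∀ᶠ k in atTop, ‖a ^ k‖ ≤ r ^ k := by
  filter_upwards [(pow_norm_pow_one_div_tendsto_nhds_spectralRadius a).eventually_lt_const hr,
    eventually_gt_atTop 0] with k hk hk0
  rw [ENNReal.ofReal_lt_coe_iff (by positivity), one_div,
    Real.rpow_inv_lt_iff_of_pos (norm_nonneg _) r.coe_nonneg (by positivity),
    Real.rpow_natCast] at hk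
  exact hk.le

theorem spectrum.spectralRadius_lt_of_forall_nnnorm_lt {A : Type*} [NormedRing A]
    [NormedAlgebra ℂ A] [CompleteSpace A] (a : A) {r : ℝ≥0} (hr0 : 0 < r)
    (hr : ∀ z ∈ spectrum ℂ a, ‖z‖₊ < r) : spectralRadius ℂ a < r := by
  obtain h | h := (spectrum ℂ a).eq_empty_or_nonempty
  · simpa [spectralRadius, h] using hr0
  · exact spectrum.spectralRadius_lt_of_forall_lt_of_nonempty h hr

theorem Matrix.exists_eventually_norm_pow_le_of_forall_spectrum_norm_lt_one {n : Type*}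
    [Fintype n] [DecidableEq n] (A : Matrix n n ℝ)
    (hA : ∀ μ ∈ spectrum ℂ (A.map Complex.ofReal), ‖μ‖ < 1) :
    ∃ r : ℝ≥0, r < 1 ∧ ∀ᶠ k in atTop, ‖A ^ k‖ ≤ r ^ k := by
  have hρ : spectralRadius ℂ (A.map Complex.ofReal) < (1 : ℝ≥0) :=
    spectrum.spectralRadius_lt_of_forall_nnnorm_lt _ one_pos fun z hz => by
      exact_mod_cast hA z hz
  obtain ⟨r, hρr, hr1⟩ := ENNReal.lt_iff_exists_nnreal_btwn.mp hρ
  refine ⟨r, by exact_mod_cast hr1, ?_⟩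
  filter_upwards [spectrum.eventually_norm_pow_le _ hρr] with k hk
  have hmap : (A ^ k).map Complex.ofReal = A.map Complex.ofReal ^ k :=
    A.map_pow Complex.ofRealHom k
  rwa [← hmap, frobenius_norm_map_eq _ _ Complex.norm_real] at hk

section
variable {ι n R : Type*} [Fintype n] [Semiring R] [TopologicalSpace R] [IsTopologicalSemiring R]

theorem HasSum.dotProduct_mulVec {f : ι → Matrix n n R} {P : Matrix n n R} (h : HasSum f P)
    (x y : n → R) : HasSum (fun i => x ⬝ᵥ f i *ᵥ y) (x ⬝ᵥ P *ᵥ y) :=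
  hasSum_sum fun i _ => (hasSum_sum fun j _ =>
    (Pi.hasSum.mp (Pi.hasSum.mp h i) j).mul_right (y j)).mul_left (x i)
end

section
variable {ι n 𝕜 : Type*} [Fintype n] [RCLike 𝕜]

theorem Matrix.PosSemidef.of_hasSum {f : ι → Matrix n n 𝕜} {P : Matrix n n 𝕜}
    (hf : ∀ i, (f i).PosSemidef) (h : HasSum f P) : P.PosSemidef := by
  refine .of_dotProduct_mulVec_nonneg ?_ fun x => ?_
  · exact h.matrix_conjTranspose.unique (by simpa only [(hf _).isHermitian.eq] using h)
  · exact (h.dotProduct_mulVec (star x) x).nonneg fun i => (hf i).dotProduct_mulVec_nonneg x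

variable [DecidableEq n] {A Q P : Matrix n n 𝕜}

theorem Matrix.summable_conjTranspose_pow_mul_mul_pow {r : ℝ≥0} (hr : r < 1)
    (hA : ∀ᶠ k in atTop, ‖A ^ k‖ ≤ r ^ k) :
    Summable fun k => (A ^ k)ᴴ * Q * A ^ k := by
  have hr2 : (r : ℝ) ^ 2 < 1 := pow_lt_one₀ r.2 hr two_ne_zero
  refine .of_norm_bounded_eventually_nat
    ((summable_geometric_of_lt_one (by positivity) hr2).mul_left ‖Q‖) ?_
  filter_upwards [hA] with k hk
  calc ‖(A ^ k)ᴴ * Q * A ^ k‖ ≤ ‖A ^ k‖ * ‖Q‖ * ‖A ^ k‖ := by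
        grw [frobenius_norm_mul, frobenius_norm_mul, frobenius_norm_conjTranspose]
    _ ≤ r ^ k * ‖Q‖ * r ^ k := by gcongr
    _ = ‖Q‖ * ((r : ℝ) ^ 2) ^ k := by ring

theorem Matrix.sub_conjTranspose_mul_mul_eq_of_hasSum
    (h : HasSum (fun k => (A ^ k)ᴴ * Q * A ^ k) P) : P - Aᴴ * P * A = Q := by
  have hshift : HasSum (fun k => (A ^ (k + 1))ᴴ * Q * A ^ (k + 1)) (P - Q) := by
    simpa using (hasSum_nat_add_iff' 1).mpr h
  have hconj : HasSum (fun k => (A ^ (k + 1))ᴴ * Q * A ^ (k + 1)) (Aᴴ * P * A) := by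
    simpa only [pow_succ, conjTranspose_mul, mul_assoc] using (h.mul_left Aᴴ).mul_right A
  rw [hconj.unique hshift, sub_sub_cancel]

theorem Matrix.PosDef.of_hasSum_conjTranspose_pow_mul_mul_pow (hQ : Q.PosDef)
    (h : HasSum (fun k => (A ^ k)ᴴ * Q * A ^ k) P) : P.PosDef := by
  have hP : P.PosSemidef := .of_hasSum (fun k => hQ.posSemidef.conjTranspose_mul_mul_same _) h
  rw [← sub_add_cancel P (Aᴴ * P * A), sub_conjTranspose_mul_mul_eq_of_hasSum h]
  exact hQ.add_posSemidef (hP.conjTranspose_mul_mul_same A)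
end

theorem stmt_10 (d : ℕ) (A : Matrix (Fin d) (Fin d) ℝ)
    (hA : ∀ μ ∈ spectrum ℂ (A.map (Complex.ofReal)), ‖μ‖ < 1) :
    ∃ P : Matrix (Fin d) (Fin d) ℝ, P.PosDef ∧ (P - Aᵀ * P * A).PosDef := by
  obtain ⟨r, hr, hpow⟩ := A.exists_eventually_norm_pow_le_of_forall_spectrum_norm_lt_one hA
  have hsum := (summable_conjTranspose_pow_mul_mul_pow (Q := 1) hr hpow).hasSum
  refine ⟨_, .of_hasSum_conjTranspose_pow_mul_mul_pow .one hsum, ?_⟩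
  rw [← conjTranspose_eq_transpose_of_trivial, sub_conjTranspose_mul_mul_eq_of_hasSum hsum]
  exact .one
end

section
/- Let A be a d×d real matrix, P positive definite with P − AᵀPA ⪰ 0 (so that ‖A‖_P ≤ 1 with ‖·‖_P the P-operator norm), Q symmetric with tP − Q ⪰ 0 for some t > 0, q ∈ ℝ^d, and X ⊆ ℝ^d. Then for all k ∈ ℕ and x ∈ X: xᵀ(Aᵏ)ᵀQAᵏx + qᵀAᵏx ≤ t‖A‖_P^{2k} μ(P)² + (‖q‖₂ / √(λ_min(P))) ‖A‖_P^k μ(P), where μ(P) = sup_{x∈X} √(xᵀPx). -/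
/-!
Write `‖x‖_P = √(xᵀPx)`. The Lyapunov inequality makes the supremum defining `‖A‖_P` bounded, so
`‖Ax‖_P ≤ ‖A‖_P ‖x‖_P` and hence `‖Aᵏx‖_P ≤ ‖A‖_Pᵏ μ(P)` on `X`. The quadratic term is then
controlled by `Q ≤ tP`, and the linear term by Cauchy–Schwarz together with
`λ_min(P) ‖y‖₂² ≤ ‖y‖_P²`, which holds because `P - λ_min(P) • 1` has nonnegative spectrum.
-/

open Matrix

namespace Matrix

variable {n : Type*} [Fintype n]

noncomputable def quadNorm (P : Matrix n n ℝ) (x : n → ℝ) : ℝ := √(x ⬝ᵥ P *ᵥ x)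

noncomputable def quadOpNorm (P A : Matrix n n ℝ) : ℝ :=
  sSup {r : ℝ | ∃ x : n → ℝ, x ≠ 0 ∧ r = √((x ⬝ᵥ (Aᵀ * P * A) *ᵥ x) / (x ⬝ᵥ P *ᵥ x))}

lemma dotProduct_transpose_mul_mul_mulVec (B C : Matrix n n ℝ) (v : n → ℝ) :
    v ⬝ᵥ (Bᵀ * C * B) *ᵥ v = (B *ᵥ v) ⬝ᵥ C *ᵥ (B *ᵥ v) := by
  rw [← mulVec_mulVec, ← mulVec_mulVec, dotProduct_mulVec, vecMul_transpose]

lemma PosSemidef.dotProduct_mulVec_le_of_sub {M N : Matrix n n ℝ} (h : (M - N).PosSemidef)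
    (v : n → ℝ) : v ⬝ᵥ N *ᵥ v ≤ v ⬝ᵥ M *ᵥ v := by
  have := h.dotProduct_mulVec_nonneg v
  rw [star_trivial, sub_mulVec, dotProduct_sub] at this
  linarith

lemma quadNorm_nonneg (P : Matrix n n ℝ) (x : n → ℝ) : 0 ≤ quadNorm P x :=
  Real.sqrt_nonneg _

lemma PosSemidef.sq_quadNorm {P : Matrix n n ℝ} (hP : P.PosSemidef) (x : n → ℝ) :
    quadNorm P x ^ 2 = x ⬝ᵥ P *ᵥ x :=
  Real.sq_sqrt (by simpa using hP.dotProduct_mulVec_nonneg x)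

lemma quadOpNorm_nonneg (P A : Matrix n n ℝ) : 0 ≤ quadOpNorm P A :=
  Real.sSup_nonneg fun _ ⟨_, _, hr⟩ ↦ hr ▸ Real.sqrt_nonneg _

section Lyapunov

variable {P A : Matrix n n ℝ} (hP : P.PosSemidef) (hA : (P - Aᵀ * P * A).PosSemidef)
include hP hA

lemma sqrt_ratio_le_quadOpNorm {x : n → ℝ} (hx : x ≠ 0) :
    √((x ⬝ᵥ (Aᵀ * P * A) *ᵥ x) / (x ⬝ᵥ P *ᵥ x)) ≤ quadOpNorm P A := by
  refine le_csSup ⟨1, ?_⟩ ⟨x, hx, rfl⟩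
  rintro _ ⟨z, -, rfl⟩
  exact Real.sqrt_le_one.mpr <| div_le_one_of_le₀ (hA.dotProduct_mulVec_le_of_sub z)
    (by simpa using hP.dotProduct_mulVec_nonneg z)

lemma quadNorm_mulVec_le (x : n → ℝ) :
    quadNorm P (A *ᵥ x) ≤ quadOpNorm P A * quadNorm P x := by
  have hAx : (A *ᵥ x) ⬝ᵥ P *ᵥ (A *ᵥ x) = x ⬝ᵥ (Aᵀ * P * A) *ᵥ x :=
    (dotProduct_transpose_mul_mul_mulVec A P x).symm
  have hx := hP.dotProduct_mulVec_nonneg x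
  rw [star_trivial] at hx
  rcases hx.eq_or_lt with hx | hx
  · -- a `P`-null vector stays `P`-null, by the Lyapunov inequality
    have : quadNorm P (A *ᵥ x) = 0 := Real.sqrt_eq_zero'.mpr <|
      hAx ▸ hx ▸ hA.dotProduct_mulVec_le_of_sub x
    rw [this]
    exact mul_nonneg (quadOpNorm_nonneg P A) (quadNorm_nonneg P x)
  · have hx0 : x ≠ 0 := by rintro rfl; simp at hx
    have h := sqrt_ratio_le_quadOpNorm hP hA hx0
    rwa [Real.sqrt_div' _ hx.le, ← hAx, div_le_iff₀ (Real.sqrt_pos.mpr hx)] at h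

lemma quadNorm_pow_mulVec_le [DecidableEq n] (k : ℕ) (x : n → ℝ) :
    quadNorm P ((A ^ k) *ᵥ x) ≤ quadOpNorm P A ^ k * quadNorm P x := by
  induction k with
  | zero => simp
  | succ k ih =>
    calc quadNorm P ((A ^ (k + 1)) *ᵥ x) = quadNorm P (A *ᵥ (A ^ k) *ᵥ x) := by
          rw [pow_succ', ← mulVec_mulVec]
      _ ≤ quadOpNorm P A * quadNorm P ((A ^ k) *ᵥ x) := quadNorm_mulVec_le hP hA _
      _ ≤ quadOpNorm P A * (quadOpNorm P A ^ k * quadNorm P x) := by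
          gcongr
          exact quadOpNorm_nonneg P A
      _ = quadOpNorm P A ^ (k + 1) * quadNorm P x := by ring

end Lyapunov

lemma quadNorm_le_sSup_image (P : Matrix n n ℝ) {X : Set (n → ℝ)} (hX : IsCompact X)
    {x : n → ℝ} (hx : x ∈ X) : quadNorm P x ≤ sSup (quadNorm P '' X) := by
  have hcont : Continuous (quadNorm P) := by
    unfold quadNorm
    simp only [dotProduct, mulVec]
    fun_prop
  exact le_csSup (hX.image hcont).bddAbove ⟨x, hx, rfl⟩

variable [DecidableEq n]

lemma IsHermitian.iInf_eigenvalues_mul_dotProduct_le {P : Matrix n n ℝ} (hP : P.IsHermitian)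
    (y : n → ℝ) : (⨅ i, hP.eigenvalues i) * (y ⬝ᵥ y) ≤ y ⬝ᵥ P *ᵥ y := by
  open scoped MatrixOrder in
  have hle : algebraMap ℝ (Matrix n n ℝ) (⨅ i, hP.eigenvalues i) ≤ P := by
    rw [algebraMap_le_iff_le_spectrum (a := P) hP.isSelfAdjoint,
      hP.spectrum_real_eq_range_eigenvalues]
    rintro _ ⟨i, rfl⟩
    exact ciInf_le (Set.finite_range _).bddBelow i
  rw [le_iff, Algebra.algebraMap_eq_smul_one] at hle
  simpa [smul_mulVec] using hle.dotProduct_mulVec_le_of_sub y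

lemma PosDef.dotProduct_le_mul_quadNorm {P : Matrix n n ℝ} (hP : P.PosDef) (q y : n → ℝ) :
    q ⬝ᵥ y ≤ √(q ⬝ᵥ q) / √(⨅ i, hP.1.eigenvalues i) * quadNorm P y := by
  rcases isEmpty_or_nonempty n with hn | hn
  · rw [Subsingleton.elim y 0, dotProduct_zero]
    exact mul_nonneg (by positivity) (quadNorm_nonneg P 0)
  set lmin := ⨅ i, hP.1.eigenvalues i
  have hlmin : 0 < lmin := by
    obtain ⟨i, hi⟩ := exists_eq_ciInf_of_finite (f := hP.1.eigenvalues)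
    exact (hP.eigenvalues_pos i).trans_eq hi
  have hCS : q ⬝ᵥ y ≤ √(q ⬝ᵥ q) * √(y ⬝ᵥ y) := by
    simpa [dotProduct, sq] using Real.sum_mul_le_sqrt_mul_sqrt Finset.univ q y
  have hy : √lmin * √(y ⬝ᵥ y) ≤ quadNorm P y := by
    rw [← Real.sqrt_mul hlmin.le]
    exact Real.sqrt_le_sqrt (hP.1.iInf_eigenvalues_mul_dotProduct_le y)
  calc q ⬝ᵥ y ≤ √(q ⬝ᵥ q) * √(y ⬝ᵥ y) := hCS
    _ ≤ √(q ⬝ᵥ q) * (quadNorm P y / √lmin) := by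
        gcongr
        rwa [le_div_iff₀ (Real.sqrt_pos.mpr hlmin), mul_comm]
    _ = √(q ⬝ᵥ q) / √lmin * quadNorm P y := by ring

end Matrix

theorem stmt_18_general (d : ℕ) (A P Q : Matrix (Fin d) (Fin d) ℝ)
    (hP : P.PosDef) (hLyap : (P - Aᵀ * P * A).PosSemidef)
    (t : ℝ) (ht : 0 < t) (htPQ : (t • P - Q).PosSemidef)
    (q : Fin d → ℝ) (X : Set (Fin d → ℝ)) (hX : IsCompact X)
    (normAP : ℝ)
    (hnorm : normAP =
      sSup {r : ℝ | ∃ x : Fin d → ℝ, x ≠ 0 ∧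
        r = Real.sqrt ((x ⬝ᵥ (Aᵀ * P * A).mulVec x) / (x ⬝ᵥ P.mulVec x))})
    (lmin : ℝ) (hlmin : lmin = ⨅ i, hP.1.eigenvalues i)
    (μ : ℝ) (hμ : μ = sSup ((fun x => Real.sqrt (x ⬝ᵥ P.mulVec x)) '' X)) :
    ∀ k : ℕ, ∀ x ∈ X,
      x ⬝ᵥ ((A ^ k)ᵀ * Q * A ^ k).mulVec x + q ⬝ᵥ (A ^ k).mulVec x ≤
        t * normAP ^ (2 * k) * μ ^ 2 +
          (Real.sqrt (q ⬝ᵥ q) / Real.sqrt lmin) * normAP ^ k * μ := by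
  intro k x hx
  change normAP = quadOpNorm P A at hnorm
  change μ = sSup (quadNorm P '' X) at hμ
  subst hnorm hμ hlmin
  set y := (A ^ k) *ᵥ x
  have hy : quadNorm P y ≤ quadOpNorm P A ^ k * sSup (quadNorm P '' X) :=
    (quadNorm_pow_mulVec_le hP.posSemidef hLyap k x).trans <|
      mul_le_mul_of_nonneg_left (quadNorm_le_sSup_image P hX hx)
        (pow_nonneg (quadOpNorm_nonneg P A) k)
  have hquadratic : x ⬝ᵥ ((A ^ k)ᵀ * Q * A ^ k) *ᵥ x ≤
      t * quadOpNorm P A ^ (2 * k) * sSup (quadNorm P '' X) ^ 2 :=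
    calc x ⬝ᵥ ((A ^ k)ᵀ * Q * A ^ k) *ᵥ x = y ⬝ᵥ Q *ᵥ y :=
          dotProduct_transpose_mul_mul_mulVec _ _ _
      _ ≤ y ⬝ᵥ (t • P) *ᵥ y := htPQ.dotProduct_mulVec_le_of_sub y
      _ = t * quadNorm P y ^ 2 := by
          rw [smul_mulVec, dotProduct_smul, hP.posSemidef.sq_quadNorm, smul_eq_mul]
      _ ≤ t * (quadOpNorm P A ^ k * sSup (quadNorm P '' X)) ^ 2 := by
          gcongr
          exact quadNorm_nonneg P y
      _ = t * quadOpNorm P A ^ (2 * k) * sSup (quadNorm P '' X) ^ 2 := by ring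
  have hlinear := (hP.dotProduct_le_mul_quadNorm q y).trans <|
    mul_le_mul_of_nonneg_left hy (by positivity)
  linarith

theorem stmt_18 (d : ℕ) (hd : 0 < d) (A P Q : Matrix (Fin d) (Fin d) ℝ)
    (hP : P.PosDef) (hLyap : (P - Aᵀ * P * A).PosSemidef)
    (hQ : Q.IsSymm) (t : ℝ) (ht : 0 < t) (htPQ : (t • P - Q).PosSemidef)
    (q : Fin d → ℝ) (X : Set (Fin d → ℝ)) (hX : IsCompact X)
    (normAP : ℝ)
    (hnorm : normAP =
      sSup {r : ℝ | ∃ x : Fin d → ℝ, x ≠ 0 ∧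
        r = Real.sqrt ((x ⬝ᵥ (Aᵀ * P * A).mulVec x) / (x ⬝ᵥ P.mulVec x))})
    (lmin : ℝ) (hlmin : lmin = ⨅ i, hP.1.eigenvalues i)
    (μ : ℝ) (hμ : μ = sSup ((fun x => Real.sqrt (x ⬝ᵥ P.mulVec x)) '' X)) :
    ∀ k : ℕ, ∀ x ∈ X,
      x ⬝ᵥ ((A ^ k)ᵀ * Q * A ^ k).mulVec x + q ⬝ᵥ (A ^ k).mulVec x ≤
        t * normAP ^ (2 * k) * μ ^ 2 +
          (Real.sqrt (q ⬝ᵥ q) / Real.sqrt lmin) * normAP ^ k * μ :=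
  stmt_18_general d A P Q hP hLyap t ht htPQ q X hX normAP hnorm lmin hlmin μ hμ
end
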